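/- Suppose f : ℝ → ℝ satisfies tan(ηL) = (β − α)η/(η² + αβ) for a sequence of positive reals η_n with η_n → ∞ and |η_n L − πk_n| ≤ π/2 for integers k_n. If additionally |tan(η_n L)| = |β − α|η_n/|η_n² + αβ|, then there exists a constant C > 0 and N such that for all n ≥ N: |η_n − πk_n/L| ≤ C/η_n. -/

import Mathlib

/-!
Write `z_n = η_n L − π k_n`. By π-periodicity `tan z_n = tan (η_n L)`, which is nonzero because
`α ≠ β`; so `z_n` stays off the endpoints `±π/2` (where Lean's `tan` is `0`) and `|z_n| ≤ |tan z_n|`.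
The right-hand side is `|β − α| η_n / |η_n² + αβ| ≤ 2|β − α| / η_n` as soon as `η_n² ≥ 2|αβ|`,
and dividing by `L` gives the claim with `C = 2|β − α| / L`.
-/

open Real Filter

namespace Real

theorem abs_le_abs_tan {x : ℝ} (hx : |x| < π / 2) : |x| ≤ |tan x| := by
  rcases le_total 0 x with h | h
  · rw [abs_of_nonneg h] at hx ⊢
    exact (le_tan h hx).trans (le_abs_self _)
  · rw [abs_of_nonpos h] at hx ⊢
    calc -x ≤ tan (-x) := le_tan (neg_nonneg.mpr h) hx
      _ = -tan x := tan_neg x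
      _ ≤ |tan x| := neg_le_abs _

theorem abs_lt_pi_div_two_of_tan_ne_zero {x : ℝ} (hx : |x| ≤ π / 2) (htan : tan x ≠ 0) :
    |x| < π / 2 := by
  refine hx.lt_of_ne fun h => htan ?_
  rcases (abs_eq (by positivity)).mp h with h | h <;> simp [h, tan_pi_div_two]

theorem abs_sub_int_mul_pi_le_abs_tan {x : ℝ} {k : ℤ} (hx : |x - π * k| ≤ π / 2)
    (htan : tan x ≠ 0) : |x - π * k| ≤ |tan x| := by
  have hper : tan (x - π * k) = tan x := by rw [mul_comm]; exact tan_sub_int_mul_pi x k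
  rw [← hper] at htan ⊢
  exact abs_le_abs_tan (abs_lt_pi_div_two_of_tan_ne_zero hx htan)

end Real

theorem abs_mul_div_abs_sq_add_le {a b x : ℝ} (hx : 0 < x) (hsq : 2 * |a| ≤ x ^ 2) :
    |b| * x / |x ^ 2 + a| ≤ 2 * |b| / x := by
  have hden : x ^ 2 / 2 ≤ |x ^ 2 + a| :=
    calc x ^ 2 / 2 ≤ x ^ 2 + a := by linarith [neg_abs_le a]
      _ ≤ |x ^ 2 + a| := le_abs_self _
  calc |b| * x / |x ^ 2 + a| ≤ |b| * x / (x ^ 2 / 2) :=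
        div_le_div_of_nonneg_left (by positivity) (by positivity) hden
    _ = 2 * |b| / x := by field_simp

theorem robin_eigenvalue_asymptotics_general (L α β : ℝ) (hL : 0 < L) (hαβ : α ≠ β)
    (η : ℕ → ℝ) (k : ℕ → ℤ)
    (htend : Tendsto η atTop atTop)
    (hclose : ∀ n, |η n * L - π * (k n : ℝ)| ≤ π / 2)
    (habs : ∀ n, |Real.tan (η n * L)| = |β - α| * η n / |(η n)^2 + α * β|) :
    ∃ C : ℝ, 0 < C ∧ ∃ N : ℕ, ∀ n ≥ N, |η n - π * (k n : ℝ) / L| ≤ C / η n := by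
  have hβα : 0 < |β - α| := abs_pos.mpr (sub_ne_zero.mpr hαβ.symm)
  obtain ⟨N, hN⟩ := ((htend.eventually_gt_atTop 0).and
    ((tendsto_pow_atTop two_ne_zero).comp htend |>.eventually_ge_atTop (2 * |α * β|)))
    |>.exists_forall_of_atTop
  refine ⟨2 * |β - α| / L, by positivity, N, fun n hn => ?_⟩
  obtain ⟨hpos, hsq : 2 * |α * β| ≤ η n ^ 2⟩ := hN n hn
  have htan : tan (η n * L) ≠ 0 := by
    rw [← abs_pos, habs n]
    have hden : 0 < η n ^ 2 + α * β := by nlinarith [neg_abs_le (α * β)]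
    exact div_pos (by positivity) (abs_pos.mpr hden.ne')
  calc |η n - π * k n / L| = |η n * L - π * k n| / L := by
        rw [← abs_of_pos hL, ← abs_div, abs_of_pos hL, sub_div, mul_div_cancel_right₀ _ hL.ne']
    _ ≤ |tan (η n * L)| / L :=
        div_le_div_of_nonneg_right (abs_sub_int_mul_pi_le_abs_tan (hclose n) htan) hL.le
    _ ≤ 2 * |β - α| / η n / L :=
        div_le_div_of_nonneg_right (habs n ▸ abs_mul_div_abs_sq_add_le hpos hsq) hL.le
    _ = 2 * |β - α| / L / η n := div_right_comm _ _ _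

/-- Asymptotics of the roots of `tan(ηL) = (β−α)η/(η²+αβ)`: if `η_n → ∞`,
`|η_n L − π k_n| ≤ π/2`, and `|tan(η_n L)| = |β−α|η_n/|η_n²+αβ|`, then for some
`C > 0` and all large `n`, `|η_n − π k_n/L| ≤ C/η_n`. -/
theorem robin_eigenvalue_asymptotics (L α β : ℝ) (hL : 0 < L) (hαβ : α ≠ β)
    (η : ℕ → ℝ) (k : ℕ → ℤ)
    (hpos : ∀ n, 0 < η n)
    (htend : Tendsto η atTop atTop)
    (hclose : ∀ n, |η n * L - π * (k n : ℝ)| ≤ π / 2)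
    (htan : ∀ n, Real.tan (η n * L) = (β - α) * η n / ((η n)^2 + α * β))
    (habs : ∀ n, |Real.tan (η n * L)| = |β - α| * η n / |(η n)^2 + α * β|) :
    ∃ C : ℝ, 0 < C ∧ ∃ N : ℕ, ∀ n ≥ N, |η n - π * (k n : ℝ) / L| ≤ C / η n :=
  robin_eigenvalue_asymptotics_general L α β hL hαβ η k htend hclose habs
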